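/- For all integers d ≥ 1 and k ≥ 2, there exist pairwise distinct complex constants x_1,…,x_k, nonzero complex constants α_1,…,α_k and β_1,…,β_l with l = ⌊(d+1)/k⌋, and natural-number exponents e_1,…,e_l with e_j < d for all j, such that the identity Σ_{j=1}^{k} α_j (x + x_j)^d = Σ_{j=1}^{l} β_j x^{e_j} holds in ℂ[X]. -/
import Mathlib


open Polynomial in
/-- **Corollary (complex identities with few terms).** For all integers
`d ≥ 1` and `k ≥ 2` there exist pairwise distinct complex constants
`x_1, …, x_k`, nonzero complex constants `α_1, …, α_k` and `β_1, …, β_l`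
with `l = ⌊(d+1)/k⌋`, and exponents `e_j < d`, such that
`∑_{j=1}^k α_j (x + x_j)^d = ∑_{j=1}^l β_j x^{e_j}` holds in `ℂ[X]`. -/
theorem complex_dependence (d k : ℕ) (hd : 1 ≤ d) (hk : 2 ≤ k) :
    ∃ (x : Fin k → ℂ) (α : Fin k → ℂ)
      (β : Fin ((d + 1) / k) → ℂ) (e : Fin ((d + 1) / k) → ℕ),
      Function.Injective x ∧ (∀ j, α j ≠ 0) ∧ (∀ j, β j ≠ 0) ∧
      (∀ j, e j < d) ∧
      ∑ j, C (α j) * (X + C (x j)) ^ d = ∑ j, C (β j) * X ^ (e j) := by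
  have hk0 : k ≠ 0 := by omega
  set ζ : ℂ := Complex.exp (2 * Real.pi * Complex.I / k) with hζdef
  have hζ : IsPrimitiveRoot ζ k := Complex.isPrimitiveRoot_exp k hk0
  have hζ0 : ζ ≠ 0 := hζ.ne_zero hk0
  set q : ℕ := (d + 1) / k with hq
  set ρ : ℕ := (d + 1) % k with hρ
  have hdm : d + 1 = k * q + ρ := (Nat.div_add_mod (d + 1) k).symm
  have hρk : ρ < k := Nat.mod_lt _ (by omega)
  -- bound on exponents
  have hebound : ∀ i : ℕ, i < q → ρ + i * k < d := by
    intro i hi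
    have h1 : (i + 1) * k ≤ q * k := Nat.mul_le_mul_right k hi
    have h2 : (i + 1) * k = i * k + k := by ring
    have h3 : q * k = k * q := Nat.mul_comm _ _
    omega
  refine ⟨fun j => ζ ^ (j : ℕ), fun j => ζ ^ (j : ℕ),
    fun i => (k : ℂ) * (d.choose (ρ + (i : ℕ) * k) : ℂ),
    fun i => ρ + (i : ℕ) * k, ?_, ?_, ?_, ?_, ?_⟩
  · intro a b hab
    exact Fin.ext (hζ.pow_inj a.2 b.2 hab)
  · intro j
    exact pow_ne_zero _ hζ0
  · intro i
    have h1 : ρ + (i : ℕ) * k ≤ d := (hebound _ i.2).le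
    have h2 : (d.choose (ρ + (i : ℕ) * k) : ℂ) ≠ 0 := by
      exact_mod_cast (Nat.choose_pos h1).ne'
    exact mul_ne_zero (by exact_mod_cast hk0) h2
  · intro i
    exact hebound _ i.2
  · ext n
    rw [finset_sum_coeff, finset_sum_coeff]
    simp only [coeff_C_mul, coeff_X_add_C_pow, coeff_X_pow]
    set t : ℕ := 1 + (d - n) with ht
    have hterm : ∀ j : Fin k, ζ ^ (j : ℕ) * ((ζ ^ (j : ℕ)) ^ (d - n) * (d.choose n : ℂ))
        = (ζ ^ t) ^ (j : ℕ) * (d.choose n : ℂ) := by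
      intro j
      rw [← mul_assoc, ← pow_mul, ← pow_add, ← pow_mul]
      congr 2
      ring
    rw [Finset.sum_congr rfl fun j _ => hterm j, ← Finset.sum_mul,
      Fin.sum_univ_eq_sum_range (fun j => (ζ ^ t) ^ j)]
    have key : ∑ j ∈ Finset.range k, (ζ ^ t) ^ j = if k ∣ t then (k : ℂ) else 0 := by
      split_ifs with hdvd
      · rw [Finset.sum_congr rfl fun j _ => by
          rw [(hζ.pow_eq_one_iff_dvd t).2 hdvd, one_pow]]
        simp
      · have h1 : ζ ^ t ≠ 1 := fun h => hdvd ((hζ.pow_eq_one_iff_dvd t).1 h)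
        rw [geom_sum_eq h1, ← pow_mul, mul_comm t k, pow_mul, hζ.pow_eq_one, one_pow,
          sub_self, zero_div]
    rw [key]
    rcases lt_or_ge d n with hn | hn
    · -- n > d : both sides zero
      rw [Nat.choose_eq_zero_of_lt hn]
      rw [Finset.sum_eq_zero]
      · simp
      · intro i _
        have h1 : ρ + (i : ℕ) * k < d := hebound _ i.2
        have h2 : n ≠ ρ + (i : ℕ) * k := by omega
        simp [h2]
    · -- n ≤ d
      have htn : t + n = d + 1 := by omega
      by_cases hdvd : k ∣ t
      · obtain ⟨c, hc⟩ := hdvd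
        have hc1 : 1 ≤ c := by
          rcases Nat.eq_zero_or_pos c with h | h
          · subst h; simp at hc; omega
          · exact h
        have hcq : c ≤ q := by
          by_contra h
          push_neg at h
          have h2 : k * (q + 1) ≤ k * c := Nat.mul_le_mul_left k h
          have h3 : k * (q + 1) = k * q + k := by ring
          omega
        have hiq : q - c < q := by omega
        have hsplit : k * q = k * (q - c) + k * c := by
          rw [← Nat.mul_add]
          congr 1
          omega
        have hcomm : (q - c) * k = k * (q - c) := Nat.mul_comm _ _
        have hn' : n = ρ + (q - c) * k := by omega
        rw [if_pos ⟨c, hc⟩, Finset.sum_eq_single (⟨q - c, hiq⟩ : Fin q)]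
        · simp [← hn']
        · intro i _ hne
          have h2 : n ≠ ρ + (i : ℕ) * k := by
            intro h
            apply hne
            have h3 : (i : ℕ) * k = (q - c) * k := by omega
            exact Fin.ext (Nat.eq_of_mul_eq_mul_right (by omega) h3)
          simp [h2]
        · intro h
          exact absurd (Finset.mem_univ _) h
      · rw [if_neg hdvd, zero_mul, eq_comm]
        apply Finset.sum_eq_zero
        intro i _
        have h2 : n ≠ ρ + (i : ℕ) * k := by
          intro h
          apply hdvd
          refine ⟨q - (i : ℕ), ?_⟩
          have hsplit : k * q = k * (q - (i : ℕ)) + k * (i : ℕ) := by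
            rw [← Nat.mul_add]
            congr 1
            omega
          have hcomm : (i : ℕ) * k = k * (i : ℕ) := Nat.mul_comm _ _
          omega
        simp [h2]
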